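/- arXiv:2510.08244 — 5 statements merged into one kernel-verified Lean document; each statement's English description precedes it below -/
import Mathlib

section
/- Let T and b be natural numbers, and let μ be a probability measure on the (finite) set of functions s : Fin T → {sleep, transmit, listen} such that μ-almost surely the number of indices i with s(i) ≠ sleep is at most b. If s and s' are sampled independently, each with distribution μ, then with probability at least 4^{−b} there is no index t < T at which one of them transmits while the other listens; that is, P( for all t < T, ¬(s(t) = transmit ∧ s'(t) = listen) ∧ ¬(s(t) = listen ∧ s'(t) = transmit) ) ≥ 4^{−b}. -/
open MeasureTheory

/-- The three states a node can be in during a round. -/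
inductive NodeState : Type
  | sleep
  | transmit
  | listen
  deriving DecidableEq

instance instFintypeNodeState : Fintype NodeState :=
  ⟨{NodeState.sleep, NodeState.transmit, NodeState.listen}, fun x => by cases x <;> simp⟩

instance : MeasurableSpace NodeState := ⊤

instance : MeasurableSingletonClass NodeState := ⟨fun _ => trivial⟩

/-- measure of a finite set is the sum of the measures of singletons -/
lemma meas_finset_sum {α : Type*} [MeasurableSpace α] [MeasurableSingletonClass α]
    (m : Measure α) (V : Finset α) : m ↑V = ∑ a ∈ V, m {a} := by
  rw [← measure_biUnion_finset ?_ (fun b _ => MeasurableSet.singleton b)]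
  · congr 1; ext x; simp
  · intro x _ y _ hxy; simp [Function.onFun, Set.disjoint_singleton, hxy]

/-- the "sleep-weight" function -/
noncomputable def h0 : NodeState → ℝ
  | .sleep => 1
  | _ => 1/2

/-- the signed transmit/listen function -/
noncomputable def uu : NodeState → ℝ
  | .sleep => 0
  | .transmit => 1/2
  | .listen => -(1/2)

lemma k_nonneg (x y : NodeState) : 0 ≤ uu x * uu y + h0 x * h0 y := by
  cases x <;> cases y <;> norm_num [uu, h0]

lemma k_le_one (x y : NodeState) : uu x * uu y + h0 x * h0 y ≤ 1 := by
  cases x <;> cases y <;> norm_num [uu, h0]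

lemma k_conflict₁ : uu .transmit * uu .listen + h0 .transmit * h0 .listen = 0 := by
  norm_num [uu, h0]

lemma k_conflict₂ : uu .listen * uu .transmit + h0 .listen * h0 .transmit = 0 := by
  norm_num [uu, h0]

theorem stmt0 (T b : ℕ) (μ : Measure (Fin T → NodeState)) [IsProbabilityMeasure μ]
    (hb : ∀ᵐ s ∂μ, (Finset.univ.filter fun i => s i ≠ NodeState.sleep).card ≤ b) :
    (4 : ENNReal)⁻¹ ^ b ≤
      (μ.prod μ) {p : (Fin T → NodeState) × (Fin T → NodeState) | ∀ t : Fin T,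
        ¬(p.1 t = NodeState.transmit ∧ p.2 t = NodeState.listen) ∧
        ¬(p.1 t = NodeState.listen ∧ p.2 t = NodeState.transmit)} := by
  classical
  set F := Fin T → NodeState
  set E : Set (F × F) := {p : F × F | ∀ t : Fin T,
        ¬(p.1 t = NodeState.transmit ∧ p.2 t = NodeState.listen) ∧
        ¬(p.1 t = NodeState.listen ∧ p.2 t = NodeState.transmit)} with hE
  set V : Finset (F × F) := (Set.toFinite E).toFinset with hV
  -- weights
  set w : F → ℝ := fun s => (μ {s}).toReal with hw
  have hw0 : ∀ s, 0 ≤ w s := fun s => ENNReal.toReal_nonneg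
  have hw1 : ∑ s, w s = 1 := by
    have h1 : μ (↑(Finset.univ : Finset F)) = ∑ s, μ {s} := meas_finset_sum μ _
    simp only [Finset.coe_univ, measure_univ] at h1
    have := congrArg ENNReal.toReal h1
    rw [ENNReal.toReal_sum (fun a _ => measure_ne_top μ _)] at this
    simpa using this.symm
  have hwb : ∀ s : F, w s ≠ 0 →
      (Finset.univ.filter fun i => s i ≠ NodeState.sleep).card ≤ b := by
    intro s hs
    by_contra hcon
    rw [ae_iff] at hb
    have hsub : {s} ⊆ {x : F | ¬ (Finset.univ.filter fun i => x i ≠ NodeState.sleep).card ≤ b} := by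
      intro x hx; rcases hx with rfl; exact hcon
    have : μ {s} = 0 := le_antisymm (hb ▸ measure_mono hsub) zero_le
    exact hs (by simp [hw, this])
  -- the PSD kernel
  set g : Finset (Fin T) → F → ℝ :=
    fun A s => (∏ t ∈ A, uu (s t)) * ∏ t ∈ Finset.univ \ A, h0 (s t) with hg
  have c1 : ∀ s s' : F, ∏ t, (uu (s t) * uu (s' t) + h0 (s t) * h0 (s' t)) =
      ∑ A ∈ (Finset.univ : Finset (Fin T)).powerset, g A s * g A s' := by
    intro s s'
    rw [Finset.prod_add]
    refine Finset.sum_congr rfl fun A _ => ?_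
    rw [Finset.prod_mul_distrib, Finset.prod_mul_distrib, hg]
    ring
  -- measure of E as a real sum
  have hEV : E = ↑V := by rw [hV, Set.Finite.coe_toFinset]
  have hmeas : ((μ.prod μ) E).toReal = ∑ p ∈ V, w p.1 * w p.2 := by
    rw [hEV, meas_finset_sum, ENNReal.toReal_sum]
    · refine Finset.sum_congr rfl fun p _ => ?_
      rw [show ({p} : Set (F × F)) = {p.1} ×ˢ {p.2} by simp,
        Measure.prod_prod, ENNReal.toReal_mul]
    · intro p _
      rw [show ({p} : Set (F × F)) = {p.1} ×ˢ {p.2} by simp, Measure.prod_prod]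
      exact ENNReal.mul_ne_top (measure_ne_top μ _) (measure_ne_top μ _)
  -- main real inequality
  have main : ((1:ℝ)/4)^b ≤ ∑ p ∈ V, w p.1 * w p.2 := by
    have step1 : ∑ s, ∑ s', w s * w s' * ∏ t, (uu (s t) * uu (s' t) + h0 (s t) * h0 (s' t))
        ≤ ∑ p ∈ V, w p.1 * w p.2 := by
      have : ∑ p ∈ V, w p.1 * w p.2
          = ∑ p : F × F, if p ∈ V then w p.1 * w p.2 else 0 := by
        rw [Finset.sum_ite_mem, Finset.univ_inter]
      rw [this, ← Finset.sum_product', Finset.univ_product_univ]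
      refine Finset.sum_le_sum fun p _ => ?_
      by_cases hp : p ∈ V
      · simp only [hp, if_true]
        calc w p.1 * w p.2 * ∏ t, (uu (p.1 t) * uu (p.2 t) + h0 (p.1 t) * h0 (p.2 t))
            ≤ w p.1 * w p.2 * 1 := by
              refine mul_le_mul_of_nonneg_left ?_ (mul_nonneg (hw0 _) (hw0 _))
              exact Finset.prod_le_one (fun t _ => k_nonneg _ _) (fun t _ => k_le_one _ _)
          _ = w p.1 * w p.2 := mul_one _
      · simp only [hp, if_false]
        have hpE : p ∉ E := by rw [hEV]; exact_mod_cast hp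
        rw [hE] at hpE
        simp only [Set.mem_setOf_eq, not_forall] at hpE
        obtain ⟨t, ht⟩ := hpE
        have hzero : ∏ t, (uu (p.1 t) * uu (p.2 t) + h0 (p.1 t) * h0 (p.2 t)) = 0 := by
          refine Finset.prod_eq_zero (Finset.mem_univ t) ?_
          rcases not_and_or.mp ht with h | h <;> rw [not_not] at h
          · rw [h.1, h.2]; exact k_conflict₁
          · rw [h.1, h.2]; exact k_conflict₂
        rw [hzero, mul_zero]
    have step2 : ∑ s, ∑ s', w s * w s' * ∏ t, (uu (s t) * uu (s' t) + h0 (s t) * h0 (s' t))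
        = ∑ A ∈ (Finset.univ : Finset (Fin T)).powerset, (∑ s, w s * g A s)^2 := by
      have e1 : ∀ s s' : F, w s * w s' * ∏ t, (uu (s t) * uu (s' t) + h0 (s t) * h0 (s' t))
          = ∑ A ∈ (Finset.univ : Finset (Fin T)).powerset,
              (w s * g A s) * (w s' * g A s') := by
        intro s s'
        rw [c1, Finset.mul_sum]
        exact Finset.sum_congr rfl fun A _ => by ring
      simp only [e1]
      have e2 : ∀ s : F, ∑ s' : F, ∑ A ∈ (Finset.univ : Finset (Fin T)).powerset,
          (w s * g A s) * (w s' * g A s')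
          = ∑ A ∈ (Finset.univ : Finset (Fin T)).powerset,
              (w s * g A s) * ∑ s' : F, (w s' * g A s') := by
        intro s
        rw [Finset.sum_comm]
        exact Finset.sum_congr rfl fun A _ => (Finset.mul_sum _ _ _).symm
      simp only [e2]
      rw [Finset.sum_comm]
      refine Finset.sum_congr rfl fun A _ => ?_
      rw [← Finset.sum_mul, sq]
    have step3 : ((1:ℝ)/4)^b ≤
        ∑ A ∈ (Finset.univ : Finset (Fin T)).powerset, (∑ s, w s * g A s)^2 := by
      have hmem : (∅ : Finset (Fin T)) ∈ (Finset.univ : Finset (Fin T)).powerset := by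
        simp
      have hsingle : (∑ s, w s * g ∅ s)^2 ≤
          ∑ A ∈ (Finset.univ : Finset (Fin T)).powerset, (∑ s, w s * g A s)^2 :=
        Finset.single_le_sum (f := fun A => (∑ s, w s * g A s)^2)
          (fun A _ => sq_nonneg _) hmem
      refine le_trans ?_ hsingle
      have hlow : ((1:ℝ)/2)^b ≤ ∑ s, w s * g ∅ s := by
        have : ∀ s : F, w s * ((1:ℝ)/2)^b ≤ w s * g ∅ s := by
          intro s
          by_cases hws : w s = 0
          · simp [hws]
          · refine mul_le_mul_of_nonneg_left ?_ (hw0 s)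
            have hgv : g ∅ s = ((1:ℝ)/2) ^
                (Finset.univ.filter fun i => s i ≠ NodeState.sleep).card := by
              rw [hg]
              simp only [Finset.prod_empty, one_mul, Finset.sdiff_empty]
              have : ∀ t : Fin T, h0 (s t) =
                  (if s t ≠ NodeState.sleep then ((1:ℝ)/2) else 1) := by
                intro t; cases h : s t <;> simp [h0]
              rw [Finset.prod_congr rfl (fun t _ => this t), Finset.prod_ite,
                Finset.prod_const, Finset.prod_const_one, mul_one]
            rw [hgv]
            exact pow_le_pow_of_le_one (by norm_num) (by norm_num) (hwb s hws)
        calc ((1:ℝ)/2)^b = ∑ s, w s * ((1:ℝ)/2)^b := by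
              rw [← Finset.sum_mul, hw1, one_mul]
          _ ≤ ∑ s, w s * g ∅ s := Finset.sum_le_sum fun s _ => this s
      calc ((1:ℝ)/4)^b = (((1:ℝ)/2)^b)^2 := by
            rw [← pow_mul, mul_comm, pow_mul]; norm_num
        _ ≤ (∑ s, w s * g ∅ s)^2 := by
            refine pow_le_pow_left₀ (by positivity) hlow 2
    rw [step2] at step1
    exact le_trans step3 step1
  -- back to ENNReal
  have hfin : (μ.prod μ) E ≠ ⊤ := measure_ne_top _ _
  calc (4 : ENNReal)⁻¹ ^ b = ENNReal.ofReal (((1:ℝ)/4)^b) := by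
        rw [ENNReal.ofReal_pow (by norm_num)]
        congr 1
        rw [show (1:ℝ)/4 = (4:ℝ)⁻¹ by norm_num,
          ENNReal.ofReal_inv_of_pos (by norm_num)]
        norm_num
    _ ≤ ENNReal.ofReal (((μ.prod μ) E).toReal) :=
        ENNReal.ofReal_le_ofReal (by rw [hmeas]; exact main)
    _ = (μ.prod μ) E := ENNReal.ofReal_toReal hfin
end

section
/- Let T and b be natural numbers, and let μ be a probability measure on the set of functions s : Fin T → {sleep, transmit, listen} such that μ-almost surely the number of indices i with s(i) ≠ sleep is at most b. Then there exists a function x : Fin T → {transmit, listen} such that μ( { s : for every awake index i of s, s(i) = x(i) } ) ≥ 2^{−b}. -/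
open MeasureTheory

instance : Fintype NodeState :=
  ⟨{NodeState.sleep, NodeState.transmit, NodeState.listen}, fun x => by cases x <;> simp⟩

set_option maxHeartbeats 1000000 in
theorem stmt1 (T b : ℕ) (μ : Measure (Fin T → NodeState)) [IsProbabilityMeasure μ]
    (hb : ∀ᵐ s ∂μ, (Finset.univ.filter fun i => s i ≠ NodeState.sleep).card ≤ b) :
    ∃ x : Fin T → NodeState, (∀ i, x i ≠ NodeState.sleep) ∧
      (2 : ENNReal)⁻¹ ^ b ≤ μ {s | ∀ i, s i ≠ NodeState.sleep → s i = x i} := by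
  classical
  set A : (Fin T → NodeState) → Set (Fin T → NodeState) :=
    fun x => {s | ∀ i, s i ≠ NodeState.sleep → s i = x i} with hA
  set X : Finset (Fin T → NodeState) :=
    Finset.univ.filter (fun x => ∀ i, x i ≠ NodeState.sleep) with hX
  have hXne : X.Nonempty := ⟨fun _ => NodeState.transmit, by simp [hX]⟩
  -- decomposition of any measure into singletons
  have hdecomp : ∀ S : Set (Fin T → NodeState), μ S = ∑ s ∈ S.toFinset, μ {s} := by
    intro S
    conv_lhs => rw [show S = ⋃ s ∈ S.toFinset, {s} by simp]
    rw [measure_biUnion_finset]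
    · intro a _ c _ hac
      simp [Set.disjoint_singleton, hac]
    · intro s _
      exact measurableSet_singleton s
  -- bad points are null
  have hnull : ∀ s : Fin T → NodeState,
      ¬ (Finset.univ.filter fun i => s i ≠ NodeState.sleep).card ≤ b → μ {s} = 0 := by
    intro s hs
    rw [ae_iff] at hb
    refine measure_mono_null ?_ hb
    intro t ht
    rw [Set.mem_singleton_iff] at ht
    subst ht
    exact hs
  -- counting lemma
  have hcount : ∀ s : Fin T → NodeState,
      (Finset.univ.filter fun i => s i ≠ NodeState.sleep).card ≤ b →
      2 ^ (T - b) ≤ (X.filter (fun x => s ∈ A x)).card := by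
    intro s hs
    set D := {i : Fin T // s i = NodeState.sleep}
    set F : (D → Bool) → (Fin T → NodeState) := fun g i =>
      if h : s i = NodeState.sleep then
        (if g ⟨i, h⟩ then NodeState.transmit else NodeState.listen) else s i with hF
    have hmem : ∀ g : D → Bool, F g ∈ X.filter (fun x => s ∈ A x) := by
      intro g
      simp only [Finset.mem_filter, hX, Finset.mem_univ, true_and]
      constructor
      · intro i
        simp only [hF]
        split
        · split <;> simp
        · assumption
      · intro i hi
        simp only [hF]
        rw [dif_neg hi]
    have hinj : Set.InjOn F ↑(Finset.univ : Finset (D → Bool)) := by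
      intro g _ g' _ hgg'
      funext i
      obtain ⟨j, hj⟩ := i
      have := congrFun hgg' j
      simp only [hF, dif_pos hj] at this
      cases hg : g ⟨j, hj⟩ <;> cases hg' : g' ⟨j, hj⟩
      · rfl
      · rw [hg, hg'] at this; simp at this
      · rw [hg, hg'] at this; simp at this
      · rfl
    have hcard := Finset.card_le_card_of_injOn F (fun g _ => hmem g) hinj
    rw [Finset.card_univ, Fintype.card_fun, Fintype.card_bool, Fintype.card_subtype] at hcard
    refine le_trans ?_ hcard
    apply Nat.pow_le_pow_right (by norm_num)
    have hsplit := Finset.card_filter_add_card_filter_not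
      (s := (Finset.univ : Finset (Fin T))) (p := fun i => s i = NodeState.sleep)
    rw [Finset.card_univ, Fintype.card_fin] at hsplit
    have : (Finset.univ.filter fun i => ¬ s i = NodeState.sleep).card
        = (Finset.univ.filter fun i => s i ≠ NodeState.sleep).card := rfl
    omega
  -- X.card ≤ 2 ^ T
  have hXcard : X.card ≤ 2 ^ T := by
    have := Finset.card_le_card_of_injOn (f := fun x (i : Fin T) => x i = NodeState.transmit)
      (s := X) (t := (Finset.univ : Finset (Fin T → Bool)))
      (fun x _ => Finset.mem_univ _) ?_
    · rwa [Finset.card_univ, Fintype.card_fun, Fintype.card_bool, Fintype.card_fin] at this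
    · intro x hx y hy hxy
      simp only [hX, Finset.mem_coe, Finset.mem_filter] at hx hy
      funext i
      have h := congrFun hxy i
      simp only [decide_eq_decide] at h
      have hx' := hx.2 i
      have hy' := hy.2 i
      cases hxi : x i <;> cases hyi : y i <;>
        first
          | rfl
          | exact absurd hxi hx'
          | exact absurd hyi hy'
          | (rw [hxi, hyi] at h; simp at h)
  -- main inequality : X.card • 2⁻¹^b ≤ ∑ x in X, μ (A x)
  have hmain : (X.card : ENNReal) * (2 : ENNReal)⁻¹ ^ b ≤ ∑ x ∈ X, μ (A x) := by
    have step1 : ∑ x ∈ X, μ (A x)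
        = ∑ s : Fin T → NodeState, ((X.filter (fun x => s ∈ A x)).card : ENNReal) * μ {s} := by
      have h1 : ∀ x, μ (A x) = ∑ s : Fin T → NodeState, if s ∈ A x then μ {s} else 0 := by
        intro x
        rw [hdecomp (A x), ← Finset.sum_filter]
        refine Finset.sum_congr ?_ (fun _ _ => rfl)
        ext s
        simp [Set.mem_toFinset]
      simp_rw [h1]
      rw [Finset.sum_comm]
      congr 1
      funext s
      rw [← Finset.sum_filter, Finset.sum_const, nsmul_eq_mul]
    rw [step1]
    have step2 : ∀ s : Fin T → NodeState,
        ((2 ^ (T - b) : ℕ) : ENNReal) * μ {s}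
          ≤ ((X.filter (fun x => s ∈ A x)).card : ENNReal) * μ {s} := by
      intro s
      by_cases hs : (Finset.univ.filter fun i => s i ≠ NodeState.sleep).card ≤ b
      · exact mul_le_mul_left (Nat.cast_le.2 (hcount s hs)) _
      · rw [hnull s hs, mul_zero, mul_zero]
    calc (X.card : ENNReal) * (2 : ENNReal)⁻¹ ^ b
        ≤ (2 : ENNReal) ^ T * (2 : ENNReal)⁻¹ ^ b := by
          apply mul_le_mul_left
          calc (X.card : ENNReal) ≤ ((2 ^ T : ℕ) : ENNReal) := Nat.cast_le.2 hXcard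
          _ = (2 : ENNReal) ^ T := by push_cast; ring
      _ ≤ (2 : ENNReal) ^ (T - b) := by
          have h2 : (2 : ENNReal) ^ T ≤ 2 ^ (T - b) * 2 ^ b := by
            rw [← pow_add]
            exact pow_le_pow_right₀ (by norm_num) le_tsub_add
          calc (2 : ENNReal) ^ T * (2:ENNReal)⁻¹ ^ b
              ≤ (2 ^ (T - b) * 2 ^ b) * (2:ENNReal)⁻¹ ^ b := mul_le_mul_left h2 _
            _ = 2 ^ (T - b) * ((2 * 2⁻¹ : ENNReal) ^ b) := by rw [mul_pow]; ring
            _ = 2 ^ (T - b) := by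
                rw [ENNReal.mul_inv_cancel (by norm_num) (by norm_num), one_pow, mul_one]
      _ = ∑ s : Fin T → NodeState, ((2 ^ (T - b) : ℕ) : ENNReal) * μ {s} := by
          rw [← Finset.mul_sum]
          have huniv : ∑ s : Fin T → NodeState, μ {s} = μ Set.univ := by
            rw [hdecomp Set.univ]
            congr 1
            simp
          rw [huniv, measure_univ, mul_one]
          push_cast
          ring
      _ ≤ _ := Finset.sum_le_sum (fun s _ => step2 s)
  -- extract the maximizer
  obtain ⟨x₀, hx₀X, hx₀max⟩ := Finset.exists_max_image X (fun x => μ (A x)) hXne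
  refine ⟨x₀, ?_, ?_⟩
  · have := Finset.mem_filter.1 (hX ▸ hx₀X)
    exact this.2
  · have hsum_le : ∑ x ∈ X, μ (A x) ≤ (X.card : ENNReal) * μ (A x₀) := by
      calc ∑ x ∈ X, μ (A x) ≤ ∑ _x ∈ X, μ (A x₀) := Finset.sum_le_sum (fun x hx => hx₀max x hx)
        _ = (X.card : ENNReal) * μ (A x₀) := by rw [Finset.sum_const, nsmul_eq_mul]
    have hfin : (X.card : ENNReal) * (2 : ENNReal)⁻¹ ^ b ≤ (X.card : ENNReal) * μ (A x₀) :=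
      hmain.trans hsum_le
    rw [ENNReal.mul_le_mul_iff_right (by exact_mod_cast hXne.card_ne_zero) (by simp)] at hfin
    exact hfin
end

section
/- Let T and b be natural numbers, and let μ be a probability measure on the set of functions s : Fin T → {sleep, transmit, listen} such that μ-almost surely the number of indices i with s(i) ≠ sleep is at most b. Then there exists a function x : Fin T → {transmit, listen} such that ( μ( { s : for every awake index i of s, s(i) = x(i) } ) )² ≥ 4^{−b}; equivalently, if s and s' are sampled independently from μ, the probability that both s and s' agree with x on all of their respective awake indices is at least 4^{−b}. -/
open MeasureTheory

instance inst_s2 : MeasurableSingletonClass NodeState :=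
  ⟨fun _ => MeasurableSpace.measurableSet_top⟩

lemma NodeState.mem_tl (a : NodeState) :
    a ∈ ({NodeState.transmit, NodeState.listen} : Finset NodeState) ↔ a ≠ NodeState.sleep := by
  cases a <;> simp

theorem stmt2 (T b : ℕ) (μ : Measure (Fin T → NodeState)) [IsProbabilityMeasure μ]
    (hb : ∀ᵐ s ∂μ, (Finset.univ.filter fun i => s i ≠ NodeState.sleep).card ≤ b) :
    ∃ x : Fin T → NodeState, (∀ i, x i ≠ NodeState.sleep) ∧
      (4 : ENNReal)⁻¹ ^ b ≤ (μ {s | ∀ i, s i ≠ NodeState.sleep → s i = x i}) ^ 2 := by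
  classical
  have hmeas : ∀ A : Set (Fin T → NodeState), MeasurableSet A := fun A =>
    (Set.toFinite A).measurableSet
  set A : (Fin T → NodeState) → Set (Fin T → NodeState) :=
    fun x => {s | ∀ i, s i ≠ NodeState.sleep → s i = x i} with hA
  set Xf : Finset (Fin T → NodeState) :=
    Fintype.piFinset fun _ => ({NodeState.transmit, NodeState.listen} : Finset NodeState)
    with hXf
  have hXcard : Xf.card = 2 ^ T := by
    simp [hXf, Fintype.card_piFinset]
  -- pointwise count
  have hcount : ∀ s : Fin T → NodeState,
      (Finset.univ.filter fun i => s i ≠ NodeState.sleep).card ≤ b →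
      (2 : ENNReal) ^ (T - b) ≤ ∑ x ∈ Xf, (A x).indicator 1 s := by
    intro s hs
    have hsum : ∑ x ∈ Xf, (A x).indicator 1 s
        = ((Xf.filter fun x => s ∈ A x).card : ENNReal) := by
      rw [Finset.card_filter]
      push_cast
      refine Finset.sum_congr rfl fun x _ => ?_
      by_cases h : s ∈ A x <;> simp [Set.indicator, h]
    rw [hsum]
    have hfil : (Xf.filter fun x => s ∈ A x)
        = Fintype.piFinset fun i => if s i = NodeState.sleep
            then ({NodeState.transmit, NodeState.listen} : Finset NodeState)
            else {s i} := by
      ext x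
      simp only [Finset.mem_filter, hXf, Fintype.mem_piFinset, hA, Set.mem_setOf_eq]
      constructor
      · rintro ⟨h1, h2⟩ i
        by_cases hsi : s i = NodeState.sleep
        · simp [hsi, h1 i]
        · rw [if_neg hsi, Finset.mem_singleton, ← h2 i hsi]
      · intro h
        constructor
        · intro i
          have := h i
          by_cases hsi : s i = NodeState.sleep
          · simpa [hsi] using this
          · rw [if_neg hsi, Finset.mem_singleton] at this
            rw [this, NodeState.mem_tl]
            exact hsi
        · intro i hsi
          have := h i
          simp only [if_neg hsi, Finset.mem_singleton] at this
          exact this.symm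
    rw [hfil, Fintype.card_piFinset]
    have hprod : ∏ i : Fin T, ((if s i = NodeState.sleep
          then ({NodeState.transmit, NodeState.listen} : Finset NodeState)
          else {s i}).card)
        = 2 ^ (Finset.univ.filter fun i => s i = NodeState.sleep).card := by
      have he : ∀ i : Fin T, ((if s i = NodeState.sleep
          then ({NodeState.transmit, NodeState.listen} : Finset NodeState)
          else {s i}).card) = if s i = NodeState.sleep then 2 else 1 := by
        intro i; split <;> simp
      rw [Finset.prod_congr rfl fun i _ => he i, Finset.prod_ite, Finset.prod_const,
        Finset.prod_const, one_pow, mul_one]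
    rw [hprod]
    push_cast
    have h1 : T - b ≤ (Finset.univ.filter fun i => s i = NodeState.sleep).card := by
      have := Finset.card_filter_add_card_filter_not
        (s := (Finset.univ : Finset (Fin T))) (p := fun i => s i = NodeState.sleep)
      simp only [Finset.card_univ, Fintype.card_fin] at this
      have hs' : (Finset.univ.filter fun i => ¬ s i = NodeState.sleep).card ≤ b := by
        simpa using hs
      omega
    exact pow_le_pow_right₀ one_le_two h1
  -- total mass lower bound
  have hsumμ : (2 : ENNReal) ^ (T - b) ≤ ∑ x ∈ Xf, μ (A x) := by
    have heq : ∑ x ∈ Xf, μ (A x) = ∫⁻ s, ∑ x ∈ Xf, (A x).indicator 1 s ∂μ := by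
      rw [lintegral_finset_sum _ fun x _ => measurable_one.indicator (hmeas _)]
      refine Finset.sum_congr rfl fun x _ => ?_
      rw [lintegral_indicator_one (hmeas _)]
    calc (2 : ENNReal) ^ (T - b) = ∫⁻ _, (2 : ENNReal) ^ (T - b) ∂μ := by
          simp [lintegral_const]
      _ ≤ ∫⁻ s, ∑ x ∈ Xf, (A x).indicator 1 s ∂μ :=
          lintegral_mono_ae (hb.mono fun s hs => hcount s hs)
      _ = ∑ x ∈ Xf, μ (A x) := heq.symm
  have hne : Xf.Nonempty := by
    rw [← Finset.card_pos, hXcard]; positivity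
  obtain ⟨x, hxX, hxmax⟩ := Finset.exists_mem_eq_sup' hne fun x => μ (A x)
  have hsum_le : ∑ y ∈ Xf, μ (A y) ≤ Xf.card • Xf.sup' hne fun y => μ (A y) :=
    Finset.sum_le_card_nsmul _ _ _ fun y hy => Finset.le_sup' (fun y => μ (A y)) hy
  have h2 : (2 : ENNReal) ^ (T - b) ≤ 2 ^ T * μ (A x) := by
    calc (2 : ENNReal) ^ (T - b) ≤ ∑ y ∈ Xf, μ (A y) := hsumμ
      _ ≤ Xf.card • Xf.sup' hne fun y => μ (A y) := hsum_le
      _ = 2 ^ T * μ (A x) := by rw [hXcard, ← hxmax, nsmul_eq_mul]; push_cast; ring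
  have keyineq : (2 : ENNReal) ^ T * 2⁻¹ ^ b ≤ 2 ^ (T - b) := by
    rw [← ENNReal.inv_pow, mul_comm, ← ENNReal.div_eq_inv_mul,
      ENNReal.div_le_iff (by positivity) (ENNReal.pow_ne_top (by norm_num)), ← pow_add]
    exact pow_le_pow_right₀ one_le_two (by omega)
  have hm : (2 : ENNReal)⁻¹ ^ b ≤ μ (A x) := by
    have key : (2 : ENNReal) ^ T * 2⁻¹ ^ b ≤ 2 ^ T * μ (A x) := keyineq.trans h2
    exact (ENNReal.mul_le_mul_iff_right (by positivity) (ENNReal.pow_ne_top (by norm_num))).mp key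
  refine ⟨x, fun i => ?_, ?_⟩
  · rw [hXf, Fintype.mem_piFinset] at hxX
    exact (NodeState.mem_tl _).mp (hxX i)
  · have h4 : (4 : ENNReal)⁻¹ ^ b = ((2 : ENNReal)⁻¹ ^ b) ^ 2 := by
      have : (4 : ENNReal)⁻¹ = (2 : ENNReal)⁻¹ ^ 2 := by
        rw [← ENNReal.inv_pow]; norm_num
      rw [this, ← pow_mul, ← pow_mul, Nat.mul_comm]
    rw [h4]
    exact pow_le_pow_left' hm 2
end

section
/- Let G = (V, E) be a finite simple graph. Assign to each vertex v an independent random rank x_v, uniformly distributed on the real interval [0,1]. Let M = { v ∈ V : x_v > x_u for every neighbor u of v } be the set of local maxima, and let R = V \ (M ∪ N(M)), where N(M) is the set of all neighbors of vertices in M. Then the expected number of edges of G with both endpoints in R is at most |E|/2. -/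
open MeasureTheory Set Finset

/-- The set of local maxima of the rank assignment `x` in the graph `G`:
vertices whose rank is strictly larger than that of every neighbor. -/
def localMaxSet {V : Type*} (G : SimpleGraph V) (x : V → ℝ) : Set V :=
  {v | ∀ u, G.Adj v u → x u < x v}

/-- The residual set `R = V \ (M ∪ N(M))`, where `M` is the set of local maxima. -/
def residualSet {V : Type*} (G : SimpleGraph V) (x : V → ℝ) : Set V :=
  Set.univ \ (localMaxSet G x ∪ {v | ∃ m ∈ localMaxSet G x, G.Adj m v})


instance nu_prob : IsProbabilityMeasure (volume.restrict (Set.Icc (0:ℝ) 1)) :=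
  ⟨by simp [Real.volume_Icc]⟩

lemma measure_beats {V : Type*} [Fintype V] [DecidableEq V] (s : Finset V) (u : V)
    (hu : u ∉ s) :
    (Measure.pi fun _ : V => volume.restrict (Set.Icc (0:ℝ) 1))
      {x : V → ℝ | ∀ w ∈ s, x w < x u} = ENNReal.ofReal (1 / (s.card + 1)) := by
  classical
  set ν : Measure ℝ := volume.restrict (Set.Icc (0:ℝ) 1) with hν
  set k := s.card with hk
  set p : V → Prop := fun i => i = u with hp
  haveI : DecidablePred p := fun i => inferInstanceAs (Decidable (i = u))
  set e := MeasurableEquiv.piEquivPiSubtypeProd (fun _ : V => ℝ) p with he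
  have hmp := measurePreserving_piEquivPiSubtypeProd (fun _ : V => ν) p
  set B : Set (({i // p i} → ℝ) × ({i // ¬ p i} → ℝ)) :=
    {y | ∀ w : {i // ¬ p i}, (w : V) ∈ s → y.2 w < y.1 ⟨u, rfl⟩} with hB
  have hBm : MeasurableSet B := by
    have : B = ⋂ (w : {i // ¬ p i}) (_ : (w : V) ∈ s),
        {y : ({i // p i} → ℝ) × ({i // ¬ p i} → ℝ) | y.2 w < y.1 ⟨u, rfl⟩} := by
      ext y; simp [hB, Set.mem_iInter]
    rw [this]
    exact MeasurableSet.iInter fun w => MeasurableSet.iInter fun _ =>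
      measurableSet_lt (measurable_snd.eval) (measurable_fst.eval)
  have hpre : e ⁻¹' B = {x : V → ℝ | ∀ w ∈ s, x w < x u} := by
    ext x
    simp only [he, hB, Set.mem_preimage, Set.mem_setOf_eq,
      MeasurableEquiv.piEquivPiSubtypeProd, MeasurableEquiv.coe_mk,
      Equiv.piEquivPiSubtypeProd_apply]
    constructor
    · intro h w hw
      exact h ⟨w, fun hwu => hu (hwu ▸ hw)⟩ hw
    · intro h w hw
      exact h w hw
  have hμA := hmp.measure_preimage hBm.nullMeasurableSet
  rw [hpre] at hμA
  rw [hμA]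
  rw [Measure.prod_apply hBm]
  have hcard : (Finset.univ.filter fun w : {i // ¬ p i} => (w : V) ∈ s).card = k := by
    rw [hk]
    apply Finset.card_bij (fun (w : {i // ¬ p i}) _ => (w : V))
    · intro a ha; exact (Finset.mem_filter.1 ha).2
    · intro a _ b _ hab; exact Subtype.ext hab
    · intro b hb
      exact ⟨⟨b, fun hbu => hu (hbu ▸ hb)⟩, Finset.mem_filter.2 ⟨Finset.mem_univ _, hb⟩, rfl⟩
  have hslice : ∀ y : {i // p i} → ℝ,
      (Measure.pi fun _ : {i // ¬ p i} => ν) (Prod.mk y ⁻¹' B)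
        = ν (Iio (y ⟨u, rfl⟩)) ^ k := by
    intro y
    have h1 : Prod.mk y ⁻¹' B =
        Set.pi Set.univ (fun w : {i // ¬ p i} =>
          if (w : V) ∈ s then Iio (y ⟨u, rfl⟩) else Set.univ) := by
      ext z
      simp only [hB, Set.mem_preimage, Set.mem_setOf_eq, Set.mem_pi, Set.mem_univ,
        forall_true_left]
      constructor
      · intro h w; by_cases hw : (w : V) ∈ s <;> simp [hw, h w]
      · intro h w hw; have := h w; rwa [if_pos hw] at this
    rw [h1, Measure.pi_pi]
    have h2 : ∀ w : {i // ¬ p i},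
        ν (if (w : V) ∈ s then Iio (y ⟨u, rfl⟩) else Set.univ)
          = if (w : V) ∈ s then ν (Iio (y ⟨u, rfl⟩)) else 1 := by
      intro w; split_ifs <;> simp
    simp_rw [h2]
    rw [Finset.prod_ite, Finset.prod_const, Finset.prod_const, one_pow, mul_one, hcard]
  simp_rw [hslice]
  -- push forward along evaluation at the unique coordinate of the first factor
  set c : {i // p i} := ⟨u, rfl⟩ with hc
  have hmap : ∀ (inst : Fintype {i // p i}),
      Measure.map (fun y : {i // p i} → ℝ => y c)
        (@Measure.pi {i // p i} (fun _ => ℝ) inst (fun _ => Real.measurableSpace)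
          (fun _ => ν)) = ν := by
    intro inst
    apply Measure.ext
    intro A hA
    rw [Measure.map_apply (measurable_pi_apply c) hA]
    have h1 : (fun y : {i // p i} → ℝ => y c) ⁻¹' A =
        Set.pi Set.univ (fun w : {i // p i} => if w = c then A else Set.univ) := by
      ext y
      simp only [Set.mem_preimage, Set.mem_pi, Set.mem_univ, forall_true_left]
      constructor
      · intro h w
        have hw : w = c := Subtype.ext w.2
        simp [hw, h]
      · intro h; have := h c; rwa [if_pos rfl] at this
    rw [h1, Measure.pi_pi]
    have h2 : ∀ w : {i // p i}, ν (if w = c then A else Set.univ)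
        = if w = c then ν A else 1 := by
      intro w; split_ifs <;> simp
    simp_rw [h2]
    rw [Finset.prod_ite, Finset.prod_const, Finset.prod_const, one_pow, mul_one,
      Finset.filter_eq' Finset.univ c, if_pos (Finset.mem_univ c), Finset.card_singleton,
      pow_one]
  have hF : Measurable fun t : ℝ => ν (Iio t) ^ k := by
    have : Monotone fun t : ℝ => ν (Iio t) := fun a b hab => measure_mono (Iio_subset_Iio hab)
    exact (this.measurable).pow_const k
  rw [← lintegral_map hF (measurable_pi_apply c), hmap _]
  have hres : (∫⁻ t : ℝ, ν (Iio t) ^ k ∂ν)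
      = ∫⁻ t in Icc (0:ℝ) 1, ENNReal.ofReal (t ^ k) ∂volume := by
    rw [hν]
    apply setLIntegral_congr_fun measurableSet_Icc
    intro t ht
    have h1 : Iio t ∩ Icc (0:ℝ) 1 = Ico 0 t := by
      ext z
      simp only [Set.mem_inter_iff, Set.mem_Iio, Set.mem_Icc, Set.mem_Ico]
      constructor
      · rintro ⟨h1, h2, _⟩; exact ⟨h2, h1⟩
      · rintro ⟨h1, h2⟩; exact ⟨h2, h1, le_trans h2.le ht.2⟩
    beta_reduce
    rw [Measure.restrict_apply measurableSet_Iio, h1, Real.volume_Ico, sub_zero,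
      ← ENNReal.ofReal_pow ht.1]
  rw [hres, ← ofReal_integral_eq_lintegral_ofReal]
  · congr 1
    rw [MeasureTheory.integral_Icc_eq_integral_Ioc, ← intervalIntegral.integral_of_le zero_le_one,
      integral_pow]
    norm_num
  · exact (continuous_pow k).integrableOn_Icc
  · exact (ae_restrict_iff' measurableSet_Icc).2 (ae_of_all _ fun t ht => pow_nonneg ht.1 k)

section Graph

variable {V : Type*} [Fintype V] [DecidableEq V] (G : SimpleGraph V) [DecidableRel G.Adj]

/-- The competitors of the ordered pair `(u,v)`: all vertices in `N(u) ∪ N(v)` other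
than `u` itself. -/
def dSet (u v : V) : Finset V := (G.neighborFinset u ∪ G.neighborFinset v).erase u

/-- `u` beats `v` if the rank of `u` exceeds the rank of every competitor. -/
def beats (u v : V) (x : V → ℝ) : Prop := ∀ w ∈ dSet G u v, x w < x u

lemma beats_not_residual {u v : V} (h : G.Adj u v) {x : V → ℝ} (hb : beats G u v x) :
    v ∉ residualSet G x := by
  intro hv
  have hM : u ∈ localMaxSet G x := by
    intro w hw
    exact hb w (Finset.mem_erase.2 ⟨(G.ne_of_adj hw).symm,
      Finset.mem_union_left _ ((G.mem_neighborFinset u w).2 hw)⟩)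
  exact hv.2 (Or.inr ⟨u, hM, h⟩)

lemma beats_unique {u u' v : V} (h : G.Adj u v) (h' : G.Adj u' v) (hne : u ≠ u') {x : V → ℝ}
    (hb : beats G u v x) (hb' : beats G u' v x) : False := by
  have h1 : x u' < x u := hb u' (Finset.mem_erase.2 ⟨hne.symm,
    Finset.mem_union_right _ ((G.mem_neighborFinset v u').2 h'.symm)⟩)
  have h2 : x u < x u' := hb' u (Finset.mem_erase.2 ⟨hne,
    Finset.mem_union_right _ ((G.mem_neighborFinset v u).2 h.symm)⟩)
  exact absurd h1 (not_lt.2 h2.le)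

lemma card_dSet_lt {u v : V} (h : G.Adj u v) :
    (dSet G u v).card + 1 ≤ G.degree u + G.degree v := by
  have hu : u ∈ G.neighborFinset u ∪ G.neighborFinset v :=
    Finset.mem_union_right _ ((G.mem_neighborFinset v u).2 h.symm)
  have h1 : (dSet G u v).card = (G.neighborFinset u ∪ G.neighborFinset v).card - 1 :=
    Finset.card_erase_of_mem hu
  have h2 : 1 ≤ (G.neighborFinset u ∪ G.neighborFinset v).card :=
    Finset.card_pos.2 ⟨u, hu⟩
  have h3 : (G.neighborFinset u ∪ G.neighborFinset v).card ≤ G.degree u + G.degree v := by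
    have := Finset.card_union_le (G.neighborFinset u) (G.neighborFinset v)
    simpa [SimpleGraph.card_neighborFinset_eq_degree] using this
  omega

lemma sum_nbhd_comm {M : Type*} [AddCommMonoid M] (f : V → V → M) :
    ∑ u, ∑ v ∈ G.neighborFinset u, f u v = ∑ v, ∑ u ∈ G.neighborFinset v, f u v := by
  simp_rw [SimpleGraph.neighborFinset_eq_filter, Finset.sum_filter]
  rw [Finset.sum_comm]
  refine Finset.sum_congr rfl fun v _ => Finset.sum_congr rfl fun u _ => ?_
  exact if_congr (G.adj_comm u v) rfl rfl

lemma fiber_card (e : Sym2 V) (he : e ∈ G.edgeFinset) :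
    ((Finset.univ.filter (fun p : V × V => G.Adj p.1 p.2)).filter
      (fun p => Sym2.mk p.1 p.2 = e)).card = 2 := by
  induction e with
  | _ a b =>
    rw [SimpleGraph.mem_edgeFinset, SimpleGraph.mem_edgeSet] at he
    have hset : ((Finset.univ.filter (fun p : V × V => G.Adj p.1 p.2)).filter
        (fun p => Sym2.mk p.1 p.2 = s(a, b))) = ({(a, b), (b, a)} : Finset (V × V)) := by
      ext ⟨p1, p2⟩
      simp only [Finset.mem_filter, Finset.mem_univ, true_and, Finset.mem_insert,
        Finset.mem_singleton, Sym2.eq_iff, Prod.mk.injEq]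
      constructor
      · rintro ⟨hadj, (⟨rfl, rfl⟩ | ⟨rfl, rfl⟩)⟩
        · exact Or.inl ⟨rfl, rfl⟩
        · exact Or.inr ⟨rfl, rfl⟩
      · rintro (⟨rfl, rfl⟩ | ⟨rfl, rfl⟩)
        · exact ⟨he, Or.inl ⟨rfl, rfl⟩⟩
        · exact ⟨he.symm, Or.inr ⟨rfl, rfl⟩⟩
    rw [hset, Finset.card_insert_of_notMem, Finset.card_singleton]
    simp only [Finset.mem_singleton, Prod.mk.injEq, not_and]
    intro hab
    exact absurd hab (G.ne_of_adj he)

lemma sum_mk (f : Sym2 V → ℕ) :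
    ∑ v, ∑ w ∈ G.neighborFinset v, f (Sym2.mk v w) = 2 * ∑ e ∈ G.edgeFinset, f e := by
  have h1 : ∑ v, ∑ w ∈ G.neighborFinset v, f (Sym2.mk v w)
      = ∑ p ∈ Finset.univ.filter (fun p : V × V => G.Adj p.1 p.2), f (Sym2.mk p.1 p.2) := by
    rw [Finset.sum_filter, Fintype.sum_prod_type]
    simp_rw [SimpleGraph.neighborFinset_eq_filter, Finset.sum_filter]
  have hmaps : ∀ p ∈ Finset.univ.filter (fun p : V × V => G.Adj p.1 p.2),
      Sym2.mk p.1 p.2 ∈ G.edgeFinset := by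
    rintro ⟨p1, p2⟩ hp
    rw [SimpleGraph.mem_edgeFinset, SimpleGraph.mem_edgeSet]
    exact (Finset.mem_filter.1 hp).2
  rw [h1, ← Finset.sum_fiberwise_of_maps_to hmaps (fun p => f (Sym2.mk p.1 p.2))]
  rw [Finset.mul_sum]
  refine Finset.sum_congr rfl fun e he => ?_
  have : ∀ p ∈ (Finset.univ.filter (fun p : V × V => G.Adj p.1 p.2)).filter
      (fun p => Sym2.mk p.1 p.2 = e), f (Sym2.mk p.1 p.2) = f e := by
    intro p hp
    rw [(Finset.mem_filter.1 hp).2]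
  rw [Finset.sum_congr rfl this, Finset.sum_const, fiber_card G e he, smul_eq_mul]

open scoped Classical in
lemma pointwise (x : V → ℝ) :
    (∑ u, ∑ v ∈ G.neighborFinset u, if beats G u v x then G.degree v else 0)
      + 2 * (G.edgeFinset.filter fun e => ∀ a ∈ e, a ∈ residualSet G x).card
    ≤ 2 * G.edgeFinset.card := by
  set kil : Sym2 V → ℕ := fun e => if (∀ a ∈ e, a ∈ residualSet G x) then 0 else 1 with hkil
  have h2 : ∀ v, (∑ u ∈ G.neighborFinset v, if beats G u v x then G.degree v else 0)
      ≤ ∑ w ∈ G.neighborFinset v, kil (Sym2.mk v w) := by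
    intro v
    by_cases hdom : ∃ u ∈ G.neighborFinset v, beats G u v x
    · obtain ⟨u₀, hu₀m, hu₀⟩ := hdom
      have hvR : v ∉ residualSet G x :=
        beats_not_residual G ((G.mem_neighborFinset v u₀).1 hu₀m).symm hu₀
      have hR : ∑ w ∈ G.neighborFinset v, kil (Sym2.mk v w) = G.degree v := by
        have : ∀ w ∈ G.neighborFinset v, kil (Sym2.mk v w) = 1 := by
          intro w _
          rw [hkil]
          simp only
          rw [if_neg]
          intro hall
          exact hvR (hall v (Sym2.mem_mk_left v w))
        rw [Finset.sum_congr rfl this, Finset.sum_const, smul_eq_mul, mul_one,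
          SimpleGraph.card_neighborFinset_eq_degree]
      have hL : (∑ u ∈ G.neighborFinset v, if beats G u v x then G.degree v else 0)
          ≤ G.degree v := by
        rw [← Finset.sum_filter, Finset.sum_const, smul_eq_mul]
        have hcard : ((G.neighborFinset v).filter (fun u => beats G u v x)).card ≤ 1 := by
          refine Finset.card_le_one.2 fun a ha b hb => ?_
          by_contra hne
          exact beats_unique G ((G.mem_neighborFinset v a).1 (Finset.mem_filter.1 ha).1).symm
            ((G.mem_neighborFinset v b).1 (Finset.mem_filter.1 hb).1).symm hne
            (Finset.mem_filter.1 ha).2 (Finset.mem_filter.1 hb).2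
        calc ((G.neighborFinset v).filter (fun u => beats G u v x)).card * G.degree v
            ≤ 1 * G.degree v := Nat.mul_le_mul_right _ hcard
          _ = G.degree v := one_mul _
      omega
    · push_neg at hdom
      have : ∀ u ∈ G.neighborFinset v, (if beats G u v x then G.degree v else 0) = 0 :=
        fun u hu => if_neg (hdom u hu)
      rw [Finset.sum_congr rfl this, Finset.sum_const, smul_eq_mul, mul_zero]
      exact Nat.zero_le _
  have h3 : (∑ u, ∑ v ∈ G.neighborFinset u, if beats G u v x then G.degree v else 0)
      ≤ 2 * ∑ e ∈ G.edgeFinset, kil e := by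
    rw [sum_nbhd_comm, ← sum_mk G kil]
    exact Finset.sum_le_sum fun v _ => h2 v
  have h5 : ∑ e ∈ G.edgeFinset, kil e
      = G.edgeFinset.card - (G.edgeFinset.filter fun e => ∀ a ∈ e, a ∈ residualSet G x).card := by
    have h6 : ∑ e ∈ G.edgeFinset, kil e
        = (G.edgeFinset.filter fun e => ¬ (∀ a ∈ e, a ∈ residualSet G x)).card := by
      rw [Finset.card_filter]
      refine Finset.sum_congr rfl fun e _ => ?_
      rw [hkil]
      simp only
      rw [ite_not]
    rw [h6, Finset.filter_not, Finset.card_sdiff_of_subset (Finset.filter_subset _ _)]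
  have hle : (G.edgeFinset.filter fun e => ∀ a ∈ e, a ∈ residualSet G x).card
      ≤ G.edgeFinset.card := Finset.card_filter_le _ _
  omega

end Graph

section Meas

variable {V : Type*} [Fintype V] [DecidableEq V] (G : SimpleGraph V) [DecidableRel G.Adj]

lemma measurableSet_forall_lt (s : Finset V) (u : V) :
    MeasurableSet {x : V → ℝ | ∀ w ∈ s, x w < x u} := by
  have h : {x : V → ℝ | ∀ w ∈ s, x w < x u} = ⋂ w ∈ s, {x : V → ℝ | x w < x u} := by
    ext x; simp
  rw [h]
  exact MeasurableSet.biInter s.countable_toSet fun w _ =>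
    measurableSet_lt (measurable_pi_apply w) (measurable_pi_apply u)

lemma measurableSet_localMax (m : V) :
    MeasurableSet {x : V → ℝ | m ∈ localMaxSet G x} := by
  have h : {x : V → ℝ | m ∈ localMaxSet G x} = ⋂ w, {x : V → ℝ | G.Adj m w → x w < x m} := by
    ext x; simp [localMaxSet]
  rw [h]
  refine MeasurableSet.iInter fun w => ?_
  by_cases hadj : G.Adj m w
  · have : {x : V → ℝ | G.Adj m w → x w < x m} = {x : V → ℝ | x w < x m} := by
      ext x; simp [hadj]
    rw [this]
    exact measurableSet_lt (measurable_pi_apply w) (measurable_pi_apply m)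
  · have : {x : V → ℝ | G.Adj m w → x w < x m} = Set.univ := by
      ext x; simp [hadj]
    rw [this]
    exact MeasurableSet.univ

lemma measurableSet_res (v : V) :
    MeasurableSet {x : V → ℝ | v ∈ residualSet G x} := by
  have h : {x : V → ℝ | v ∈ residualSet G x} =
      ({x : V → ℝ | v ∈ localMaxSet G x} ∪
        ⋃ m, ⋃ (_ : G.Adj m v), {x : V → ℝ | m ∈ localMaxSet G x})ᶜ := by
    ext x
    simp only [residualSet, Set.mem_setOf_eq, Set.mem_diff, Set.mem_univ, true_and,
      Set.mem_union, Set.mem_compl_iff, Set.mem_iUnion]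
    constructor
    · intro hx
      intro hc
      apply hx
      rcases hc with h1 | ⟨m, hadj, hm⟩
      · exact Or.inl h1
      · exact Or.inr ⟨m, hm, hadj⟩
    · intro hx hc
      apply hx
      rcases hc with h1 | ⟨m, hm, hadj⟩
      · exact Or.inl h1
      · exact Or.inr ⟨m, hadj, hm⟩
  rw [h]
  exact (MeasurableSet.union (measurableSet_localMax G v)
    (MeasurableSet.iUnion fun m => MeasurableSet.iUnion fun _ =>
      measurableSet_localMax G m)).compl

lemma measurableSet_surv (e : Sym2 V) :
    MeasurableSet {x : V → ℝ | ∀ a ∈ e, a ∈ residualSet G x} := by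
  induction e with
  | _ a b =>
    have h : {x : V → ℝ | ∀ c ∈ s(a, b), c ∈ residualSet G x}
        = {x : V → ℝ | a ∈ residualSet G x} ∩ {x : V → ℝ | b ∈ residualSet G x} := by
      ext x
      simp only [Set.mem_setOf_eq, Set.mem_inter_iff, Sym2.mem_iff]
      constructor
      · intro h; exact ⟨h a (Or.inl rfl), h b (Or.inr rfl)⟩
      · rintro ⟨h1, h2⟩ c (rfl | rfl) <;> assumption
    rw [h]
    exact (measurableSet_res G a).inter (measurableSet_res G b)

end Meas

theorem stmt5 {V : Type*} [Fintype V] [DecidableEq V]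
    (G : SimpleGraph V) [DecidableRel G.Adj] :
    ∫ x : V → ℝ,
        (({e : Sym2 V | e ∈ G.edgeSet ∧ ∀ v ∈ e, v ∈ residualSet G x}).ncard : ℝ)
        ∂(Measure.pi fun _ : V => volume.restrict (Set.Icc (0 : ℝ) 1)) ≤
      (G.edgeFinset.card : ℝ) / 2 := by
  classical
  set μ : Measure (V → ℝ) := Measure.pi fun _ : V => volume.restrict (Set.Icc (0:ℝ) 1) with hμ
  haveI : IsProbabilityMeasure μ := by rw [hμ]; infer_instance
  have hAm : ∀ u v : V, MeasurableSet {x : V → ℝ | beats G u v x} := fun u v =>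
    measurableSet_forall_lt (dSet G u v) u
  have hSm : ∀ e : Sym2 V, MeasurableSet {x : V → ℝ | ∀ a ∈ e, a ∈ residualSet G x} :=
    measurableSet_surv G
  set f : (V → ℝ) → ℝ := fun x => ∑ e ∈ G.edgeFinset,
    Set.indicator {x' : V → ℝ | ∀ a ∈ e, a ∈ residualSet G x'} (1 : (V → ℝ) → ℝ) x with hf
  set g : (V → ℝ) → ℝ := fun x => ∑ u, ∑ v ∈ G.neighborFinset u,
    (G.degree v : ℝ) * Set.indicator {x' : V → ℝ | beats G u v x'} (1 : (V → ℝ) → ℝ) x with hg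
  -- rewrite the integrand
  have hfx : ∀ x : V → ℝ,
      (({e : Sym2 V | e ∈ G.edgeSet ∧ ∀ v ∈ e, v ∈ residualSet G x}).ncard : ℝ)
        = ((G.edgeFinset.filter fun e => ∀ a ∈ e, a ∈ residualSet G x).card : ℝ) := by
    intro x
    congr 1
    have hset : {e : Sym2 V | e ∈ G.edgeSet ∧ ∀ v ∈ e, v ∈ residualSet G x}
        = ↑(G.edgeFinset.filter fun e => ∀ a ∈ e, a ∈ residualSet G x) := by
      ext e
      simp [SimpleGraph.mem_edgeFinset]
    rw [hset, Set.ncard_coe_finset]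
  have hfx2 : ∀ x : V → ℝ,
      ((G.edgeFinset.filter fun e => ∀ a ∈ e, a ∈ residualSet G x).card : ℝ) = f x := by
    intro x
    rw [hf, Finset.card_filter]
    push_cast
    refine Finset.sum_congr rfl fun e _ => ?_
    by_cases hP : ∀ a ∈ e, a ∈ residualSet G x
    · rw [if_pos hP, Set.indicator_of_mem
        (show x ∈ {x' : V → ℝ | ∀ a ∈ e, a ∈ residualSet G x'} from hP) (1 : (V → ℝ) → ℝ),
        Pi.one_apply]
    · rw [if_neg hP, Set.indicator_of_notMem
        (show x ∉ {x' : V → ℝ | ∀ a ∈ e, a ∈ residualSet G x'} from hP)]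
  -- pointwise inequality, real version
  have hpt : ∀ x : V → ℝ, f x ≤ (G.edgeFinset.card : ℝ) - g x / 2 := by
    intro x
    have hN := pointwise G x
    have hgx : g x = ((∑ u, ∑ v ∈ G.neighborFinset u,
        if beats G u v x then G.degree v else 0 : ℕ) : ℝ) := by
      rw [hg]
      push_cast
      refine Finset.sum_congr rfl fun u _ => Finset.sum_congr rfl fun v _ => ?_
      by_cases hb : beats G u v x
      · rw [Set.indicator_of_mem
          (show x ∈ {x' : V → ℝ | beats G u v x'} from hb) (1 : (V → ℝ) → ℝ),
          Pi.one_apply, mul_one, if_pos hb]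
      · rw [Set.indicator_of_notMem
          (show x ∉ {x' : V → ℝ | beats G u v x'} from hb), mul_zero, if_neg hb]
    have hfx3 : f x = ((G.edgeFinset.filter fun e => ∀ a ∈ e, a ∈ residualSet G x).card : ℝ) :=
      (hfx2 x).symm
    have hcast : g x + 2 * f x ≤ 2 * (G.edgeFinset.card : ℝ) := by
      rw [hgx, hfx3]
      exact_mod_cast hN
    linarith
  -- integrability
  have hfInt : Integrable f μ := by
    rw [hf]
    exact integrable_finset_sum _ fun e _ => (integrable_const (1:ℝ)).indicator (hSm e)
  have hgInt : Integrable g μ := by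
    rw [hg]
    exact integrable_finset_sum _ fun u _ => integrable_finset_sum _ fun v _ =>
      ((integrable_const (1:ℝ)).indicator (hAm u v)).const_mul _
  -- the integral of g
  have hIab : ∀ u v : V, Integrable (fun x => (G.degree v : ℝ) *
      Set.indicator {x' : V → ℝ | beats G u v x'} (1 : (V → ℝ) → ℝ) x) μ := fun u v =>
    ((integrable_const (1:ℝ)).indicator (hAm u v)).const_mul _
  have hgval : ∫ x, g x ∂μ = ∑ u, ∑ v ∈ G.neighborFinset u,
      (G.degree v : ℝ) * (μ {x : V → ℝ | beats G u v x}).toReal := by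
    simp only [hg]
    rw [integral_finset_sum _ (fun u _ => integrable_finset_sum _ fun v _ => hIab u v)]
    refine Finset.sum_congr rfl fun u _ => ?_
    rw [integral_finset_sum _ (fun v _ => hIab u v)]
    refine Finset.sum_congr rfl fun v _ => ?_
    rw [integral_const_mul, integral_indicator_one (hAm u v), measureReal_def]
  -- lower bound for the beat probabilities
  have hlow : ∀ u v : V, v ∈ G.neighborFinset u →
      (1:ℝ)/(G.degree u + G.degree v) ≤ (μ {x : V → ℝ | beats G u v x}).toReal := by
    intro u v hv
    have hadj : G.Adj u v := (G.mem_neighborFinset u v).1 hv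
    have h0 : {x : V → ℝ | beats G u v x} = {x : V → ℝ | ∀ w ∈ dSet G u v, x w < x u} := rfl
    have hmeasval : μ {x : V → ℝ | beats G u v x}
        = ENNReal.ofReal (1 / ((dSet G u v).card + 1)) := by
      rw [hμ, h0]
      exact measure_beats (dSet G u v) u (Finset.notMem_erase u _)
    rw [hmeasval, ENNReal.toReal_ofReal (by positivity)]
    apply one_div_le_one_div_of_le (by positivity)
    exact_mod_cast card_dSet_lt G hadj
  -- the symmetric sum identity
  have hsym : ∑ u, ∑ v ∈ G.neighborFinset u,
      (G.degree v : ℝ)/(G.degree u + G.degree v) = (G.edgeFinset.card : ℝ) := by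
    have hsw : ∑ u, ∑ v ∈ G.neighborFinset u, (G.degree u : ℝ)/(G.degree u + G.degree v)
        = ∑ u, ∑ v ∈ G.neighborFinset u, (G.degree v : ℝ)/(G.degree v + G.degree u) :=
      sum_nbhd_comm G (fun a b => (G.degree a : ℝ)/(G.degree a + G.degree b))
    have hsw2 : ∑ u, ∑ v ∈ G.neighborFinset u, (G.degree v : ℝ)/(G.degree v + G.degree u)
        = ∑ u, ∑ v ∈ G.neighborFinset u, (G.degree v : ℝ)/(G.degree u + G.degree v) := by
      refine Finset.sum_congr rfl fun u _ => Finset.sum_congr rfl fun v _ => ?_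
      rw [add_comm]
    have hone : ∑ u, ∑ v ∈ G.neighborFinset u,
        ((G.degree v : ℝ)/(G.degree u + G.degree v)
          + (G.degree u : ℝ)/(G.degree u + G.degree v)) = ∑ u, (G.degree u : ℝ) := by
      refine Finset.sum_congr rfl fun u _ => ?_
      have hin : ∀ v ∈ G.neighborFinset u,
          (G.degree v : ℝ)/(G.degree u + G.degree v)
            + (G.degree u : ℝ)/(G.degree u + G.degree v) = 1 := by
        intro v hv
        have hadj : G.Adj u v := (G.mem_neighborFinset u v).1 hv
        have h1 : 0 < G.degree u := (G.degree_pos_iff_exists_adj u).2 ⟨v, hadj⟩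
        have hdpos : (0:ℝ) < G.degree u + G.degree v := by
          have h2 : (0:ℝ) < G.degree u := by exact_mod_cast h1
          have h3 : (0:ℝ) ≤ G.degree v := by positivity
          linarith
        rw [← add_div, add_comm ((G.degree v : ℝ)) _, div_self hdpos.ne']
      rw [Finset.sum_congr rfl hin, Finset.sum_const, nsmul_eq_mul, mul_one,
        SimpleGraph.card_neighborFinset_eq_degree]
    have hsplit : ∑ u, ∑ v ∈ G.neighborFinset u,
        ((G.degree v : ℝ)/(G.degree u + G.degree v)
          + (G.degree u : ℝ)/(G.degree u + G.degree v))
        = (∑ u, ∑ v ∈ G.neighborFinset u, (G.degree v : ℝ)/(G.degree u + G.degree v))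
          + ∑ u, ∑ v ∈ G.neighborFinset u, (G.degree u : ℝ)/(G.degree u + G.degree v) := by
      rw [← Finset.sum_add_distrib]
      refine Finset.sum_congr rfl fun u _ => ?_
      rw [← Finset.sum_add_distrib]
    have hhs : ∑ u, (G.degree u : ℝ) = 2 * (G.edgeFinset.card : ℝ) := by
      have := G.sum_degrees_eq_twice_card_edges
      exact_mod_cast this
    have h2T : ∑ u, ∑ v ∈ G.neighborFinset u, (G.degree u : ℝ)/(G.degree u + G.degree v)
        = ∑ u, ∑ v ∈ G.neighborFinset u, (G.degree v : ℝ)/(G.degree u + G.degree v) :=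
      hsw.trans hsw2
    have hfin : (∑ u, ∑ v ∈ G.neighborFinset u, (G.degree v : ℝ)/(G.degree u + G.degree v))
        + ∑ u, ∑ v ∈ G.neighborFinset u, (G.degree u : ℝ)/(G.degree u + G.degree v)
        = 2 * (G.edgeFinset.card : ℝ) := by rw [← hsplit, hone, hhs]
    linarith [hfin, h2T]
  -- lower bound the integral of g
  have hTle : (G.edgeFinset.card : ℝ) ≤ ∫ x, g x ∂μ := by
    rw [hgval, ← hsym]
    refine Finset.sum_le_sum fun u _ => Finset.sum_le_sum fun v hv => ?_
    rw [div_eq_mul_one_div]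
    exact mul_le_mul_of_nonneg_left (hlow u v hv) (by positivity)
  -- put it together
  have hint1 : ∫ x, f x ∂μ ≤ ∫ x, ((G.edgeFinset.card : ℝ) - g x / 2) ∂μ :=
    integral_mono hfInt ((integrable_const _).sub (hgInt.div_const 2)) hpt
  have hint2 : ∫ x, ((G.edgeFinset.card : ℝ) - g x / 2) ∂μ
      = (G.edgeFinset.card : ℝ) - (∫ x, g x ∂μ) / 2 := by
    rw [integral_sub (integrable_const _) (hgInt.div_const 2), integral_const, probReal_univ,
      one_smul, integral_div]
  have hrw : (fun x : V → ℝ =>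
      (({e : Sym2 V | e ∈ G.edgeSet ∧ ∀ v ∈ e, v ∈ residualSet G x}).ncard : ℝ)) = f :=
    funext fun x => (hfx x).trans (hfx2 x)
  calc ∫ x : V → ℝ, (({e : Sym2 V | e ∈ G.edgeSet ∧ ∀ v ∈ e, v ∈ residualSet G x}).ncard : ℝ) ∂μ
      = ∫ x, f x ∂μ := by rw [hrw]
    _ ≤ (G.edgeFinset.card : ℝ) - (∫ x, g x ∂μ) / 2 := hint1.trans_eq hint2
    _ ≤ (G.edgeFinset.card : ℝ) - (G.edgeFinset.card : ℝ) / 2 := by linarith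
    _ = (G.edgeFinset.card : ℝ) / 2 := by ring
end

section
/- Let X_1, X_2, …, X_n be independent geometric random variables with parameters p_1, p_2, …, p_n ∈ (0,1] respectively. Let X = X_1 + ⋯ + X_n, let μ = E[X] = Σ_{i=1}^n 1/p_i, and let p* = min_i p_i. Then for every real λ ≥ 1, P(X ≥ λ·μ) ≤ exp(−p*·μ·(λ − 1 − ln λ)). -/
set_option maxHeartbeats 1000000

open MeasureTheory ProbabilityTheory

lemma geom_mgf_bound {Ω : Type*} [MeasurableSpace Ω] (μ : Measure Ω) [IsProbabilityMeasure μ]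
    (p : ℝ) (hp0 : 0 < p) (hp1 : p ≤ 1) (X : Ω → ℕ) (hX : Measurable X)
    (hpos : ∀ ω, 1 ≤ X ω)
    (hgeom : ∀ k : ℕ, 1 ≤ k → μ {ω | X ω = k} = ENNReal.ofReal ((1 - p) ^ (k - 1) * p))
    (t : ℝ) (ht0 : 0 ≤ t) (htp : t < p) :
    Integrable (fun ω => Real.exp (t * (X ω : ℝ))) μ ∧
      mgf (fun ω => (X ω : ℝ)) μ t ≤ p / (p - t) := by
  set r : ℝ := (1 - p) * Real.exp t with hr
  have hexp_t : (0:ℝ) < Real.exp t := Real.exp_pos t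
  have h1t : 1 - t ≤ Real.exp (-t) := by
    have := Real.add_one_le_exp (-t); linarith
  have hr0 : 0 ≤ r := mul_nonneg (by linarith) hexp_t.le
  have hr1 : r < 1 := by
    have h2 : 1 - p < Real.exp (-t) := by linarith
    have := mul_lt_mul_of_pos_right h2 hexp_t
    rwa [← Real.exp_add, neg_add_cancel, Real.exp_zero] at this
  have hd : (0:ℝ) < 1 - r := by linarith
  have hpt : (0:ℝ) < p - t := by linarith
  -- the lintegral computation
  have hmeas' : Measurable fun ω => Real.exp (t * (X ω : ℝ)) :=
    ((measurable_from_nat.comp hX : Measurable fun ω => ((X ω : ℝ))).const_mul t).exp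
  have key : ∫⁻ ω, ENNReal.ofReal (Real.exp (t * (X ω : ℝ))) ∂μ
      = ENNReal.ofReal (p * Real.exp t * (1 - r)⁻¹) := by
    have hmap : ∫⁻ ω, ENNReal.ofReal (Real.exp (t * (X ω : ℝ))) ∂μ
        = ∫⁻ k, ENNReal.ofReal (Real.exp (t * (k : ℝ))) ∂(μ.map X) := by
      rw [lintegral_map (by fun_prop) hX]
    rw [hmap, lintegral_countable']
    have hsing : ∀ k : ℕ, (μ.map X) {k} = μ {ω | X ω = k} := by
      intro k
      rw [Measure.map_apply hX (measurableSet_singleton k)]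
      rfl
    have h0 : (μ.map X) {0} = 0 := by
      rw [hsing]
      have : {ω | X ω = 0} = (∅ : Set Ω) := by
        ext ω; simp only [Set.mem_setOf_eq, Set.mem_empty_iff_false, iff_false]
        exact fun h => by have := hpos ω; omega
      rw [this, measure_empty]
    rw [tsum_eq_zero_add' ENNReal.summable]
    simp only [h0, mul_zero, zero_add]
    have hterm : ∀ j : ℕ, ENNReal.ofReal (Real.exp (t * ((j+1 : ℕ) : ℝ))) * (μ.map X) {(j+1 : ℕ)}
        = ENNReal.ofReal (p * Real.exp t * r ^ j) := by
      intro j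
      rw [hsing, hgeom (j+1) (by omega)]
      rw [← ENNReal.ofReal_mul (Real.exp_nonneg _)]
      congr 1
      have : Real.exp (t * ((j+1 : ℕ) : ℝ)) = Real.exp t * (Real.exp t) ^ j := by
        push_cast
        rw [mul_add, mul_one, Real.exp_add, ← Real.exp_nat_mul, mul_comm (j:ℝ) t, mul_comm]
      rw [this]
      simp only [Nat.add_sub_cancel, hr, mul_pow]
      ring
    simp only [hterm]
    rw [← ENNReal.ofReal_tsum_of_nonneg
        (fun j => mul_nonneg (mul_nonneg hp0.le hexp_t.le) (pow_nonneg hr0 j))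
        ((summable_geometric_of_lt_one hr0 hr1).mul_left _)]
    rw [tsum_mul_left, tsum_geometric_of_lt_one hr0 hr1]
  have hfin : ∫⁻ ω, ENNReal.ofReal (Real.exp (t * (X ω : ℝ))) ∂μ < ⊤ := by
    rw [key]; exact ENNReal.ofReal_lt_top
  have hint : Integrable (fun ω => Real.exp (t * (X ω : ℝ))) μ := by
    refine ⟨hmeas'.aestronglyMeasurable, ?_⟩
    rw [HasFiniteIntegral]
    calc ∫⁻ ω, ‖Real.exp (t * (X ω : ℝ))‖₊ ∂μ
        = ∫⁻ ω, ENNReal.ofReal (Real.exp (t * (X ω : ℝ))) ∂μ := by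
          congr 1; ext ω; exact Real.enorm_eq_ofReal (Real.exp_nonneg _)
      _ < ⊤ := hfin
  refine ⟨hint, ?_⟩
  have hmgf : mgf (fun ω => (X ω : ℝ)) μ t = p * Real.exp t * (1 - r)⁻¹ := by
    rw [mgf, integral_eq_lintegral_of_nonneg_ae
      (Filter.Eventually.of_forall fun ω => Real.exp_nonneg _) hmeas'.aestronglyMeasurable,
      key, ENNReal.toReal_ofReal
        (mul_nonneg (mul_nonneg hp0.le hexp_t.le) (inv_nonneg.mpr hd.le))]
  rw [hmgf]
  rw [mul_inv_le_iff₀ hd, div_mul_eq_mul_div, le_div_iff₀ hpt]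
  -- p * exp t * (p - t) ≤ p * (1 - r)
  have hee : Real.exp t * Real.exp (-t) = 1 := by
    rw [← Real.exp_add]; simp
  have hkey : Real.exp t * (1 - t) ≤ 1 := by
    nlinarith [mul_le_mul_of_nonneg_left h1t hexp_t.le]
  nlinarith [hexp_t, hp0]

theorem stmt12 {Ω : Type*} [MeasurableSpace Ω] (μ : Measure Ω) [IsProbabilityMeasure μ]
    (n : ℕ) (hn : 0 < n) (p : Fin n → ℝ) (hp0 : ∀ i, 0 < p i) (hp1 : ∀ i, p i ≤ 1)
    (X : Fin n → Ω → ℕ) (hmeas : ∀ i, Measurable (X i))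
    (hindep : iIndepFun X μ)
    (hpos : ∀ i ω, 1 ≤ X i ω)
    (hgeom : ∀ i, ∀ k : ℕ, 1 ≤ k →
      μ {ω | X i ω = k} = ENNReal.ofReal ((1 - p i) ^ (k - 1) * p i))
    (mean pstar : ℝ) (hmean : mean = ∑ i, 1 / p i)
    (hstar_le : ∀ i, pstar ≤ p i) (hstar_mem : ∃ i, pstar = p i) :
    ∀ lam : ℝ, 1 ≤ lam →
      μ {ω | lam * mean ≤ ∑ i, (X i ω : ℝ)} ≤
        ENNReal.ofReal (Real.exp (-(pstar * mean * (lam - 1 - Real.log lam)))) := by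
  intro lam hlam
  obtain ⟨i0, hi0⟩ := hstar_mem
  have hps0 : 0 < pstar := hi0 ▸ hp0 i0
  have hlam0 : (0:ℝ) < lam := lt_of_lt_of_le one_pos hlam
  have hinv0 : (0:ℝ) < 1 / lam := by positivity
  have hinv1 : 1 / lam ≤ 1 := by
    rw [div_le_one hlam0]; exact hlam
  set t : ℝ := pstar * (1 - 1 / lam) with ht_def
  have ht0 : 0 ≤ t := mul_nonneg hps0.le (by linarith)
  have htp : ∀ i, t < p i := by
    intro i
    have h1 : t < pstar := by
      have : (1 : ℝ) - 1 / lam < 1 := by linarith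
      calc t = pstar * (1 - 1/lam) := rfl
        _ < pstar * 1 := by exact mul_lt_mul_of_pos_left this hps0
        _ = pstar := mul_one _
    exact lt_of_lt_of_le h1 (hstar_le i)
  set Y : Fin n → Ω → ℝ := fun i ω => (X i ω : ℝ) with hY
  have hYmeas : ∀ i, Measurable (Y i) := fun i => measurable_from_nat.comp (hmeas i)
  have hYindep : iIndepFun Y μ :=
    hindep.comp (fun _ (k : ℕ) => (k : ℝ)) (fun _ => measurable_from_nat)
  have hib : ∀ i, Integrable (fun ω => Real.exp (t * Y i ω)) μ ∧
      mgf (Y i) μ t ≤ p i / (p i - t) := fun i =>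
    geom_mgf_bound μ (p i) (hp0 i) (hp1 i) (X i) (hmeas i) (hpos i) (hgeom i) t ht0 (htp i)
  -- Chernoff bound
  have hint_sum : Integrable (fun ω => Real.exp (t * (∑ i, Y i) ω)) μ :=
    hYindep.integrable_exp_mul_sum hYmeas (fun i _ => (hib i).1)
  have hcher : (μ {ω | lam * mean ≤ (∑ i, Y i) ω}).toReal ≤
      Real.exp (-t * (lam * mean)) * mgf (∑ i, Y i) μ t :=
    measure_ge_le_exp_mul_mgf (lam * mean) ht0 hint_sum
  have hmgf_sum : mgf (∑ i, Y i) μ t = ∏ i, mgf (Y i) μ t :=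
    hYindep.mgf_sum hYmeas Finset.univ
  -- bound each mgf factor by exp ((pstar / p i) * log lam)
  have hfac : ∀ i, mgf (Y i) μ t ≤ Real.exp (pstar / p i * Real.log lam) := by
    intro i
    refine le_trans (hib i).2 ?_
    have hpi0 := hp0 i
    have hpt : (0:ℝ) < p i - t := by linarith [htp i]
    set c : ℝ := pstar / p i with hc
    have hc0 : 0 ≤ c := div_nonneg hps0.le hpi0.le
    have hc1 : c ≤ 1 := div_le_one_of_le₀ (hstar_le i) hpi0.le
    have hber : (1 / lam) ^ c ≤ 1 + c * (1 / lam - 1) := by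
      have := rpow_one_add_le_one_add_mul_self (s := 1/lam - 1) (by linarith) hc0 hc1
      simpa using this
    have hrhs : 1 + c * (1 / lam - 1) = (p i - t) / p i := by
      field_simp [ht_def, hc]
      have hcp : c * p i = pstar := by rw [hc]; exact div_mul_cancel₀ _ hpi0.ne'
      have htl : t * lam = pstar * (lam - 1) := by rw [ht_def]; field_simp
      linear_combination (1 - lam) * hcp + htl
    have hpow0 : (0:ℝ) < (1 / lam) ^ c := Real.rpow_pos_of_pos hinv0 c
    have h3 : (1 / lam) ^ c ≤ (p i - t) / p i := by rw [← hrhs]; exact hber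
    have h2 : p i / (p i - t) ≤ ((1 / lam) ^ c)⁻¹ := by
      rw [show p i / (p i - t) = ((p i - t) / p i)⁻¹ by rw [inv_div]]
      exact inv_anti₀ hpow0 h3
    refine h2.trans ?_
    have hident : ((1 / lam) ^ c)⁻¹ = lam ^ c := by
      rw [one_div, Real.inv_rpow hlam0.le, inv_inv]
    rw [hident, Real.rpow_def_of_pos hlam0, mul_comm (Real.log lam) c]
  -- combine
  have hprod : (∏ i, mgf (Y i) μ t) ≤ Real.exp (pstar * mean * Real.log lam) := by
    calc (∏ i, mgf (Y i) μ t) ≤ ∏ i, Real.exp (pstar / p i * Real.log lam) :=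
          Finset.prod_le_prod (fun i _ => mgf_nonneg) (fun i _ => hfac i)
      _ = Real.exp (∑ i, pstar / p i * Real.log lam) := (Real.exp_sum _ _).symm
      _ = Real.exp (pstar * mean * Real.log lam) := by
          congr 1
          rw [hmean, Finset.mul_sum, Finset.sum_mul]
          exact Finset.sum_congr rfl fun i _ => by rw [mul_one_div]

  have hfinal : (μ {ω | lam * mean ≤ (∑ i, Y i) ω}).toReal ≤
      Real.exp (-(pstar * mean * (lam - 1 - Real.log lam))) := by
    refine hcher.trans ?_
    rw [hmgf_sum]
    calc Real.exp (-t * (lam * mean)) * ∏ i, mgf (Y i) μ t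
        ≤ Real.exp (-t * (lam * mean)) * Real.exp (pstar * mean * Real.log lam) := by
          exact mul_le_mul_of_nonneg_left hprod (Real.exp_nonneg _)
      _ = Real.exp (-t * (lam * mean) + pstar * mean * Real.log lam) := (Real.exp_add _ _).symm
      _ = Real.exp (-(pstar * mean * (lam - 1 - Real.log lam))) := by
          have htl : t * lam = pstar * (lam - 1) := by
            rw [ht_def]; field_simp
          congr 1
          linear_combination (-mean) * htl
  have hset : {ω | lam * mean ≤ ∑ i, (X i ω : ℝ)} = {ω | lam * mean ≤ (∑ i, Y i) ω} := by
    ext ω; simp [hY, Finset.sum_apply]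
  rw [hset]
  calc μ {ω | lam * mean ≤ (∑ i, Y i) ω}
      = ENNReal.ofReal ((μ {ω | lam * mean ≤ (∑ i, Y i) ω}).toReal) :=
        (ENNReal.ofReal_toReal (measure_ne_top _ _)).symm
    _ ≤ ENNReal.ofReal (Real.exp (-(pstar * mean * (lam - 1 - Real.log lam)))) :=
        ENNReal.ofReal_le_ofReal hfinal
end
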